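/- Let x and y be distinct nodes in an ADMG G. There exist a node z and a set W such that ({z},W) is a valid conditional instrumental set relative to (x,y) in G if and only if there exist a node z' and a set W' ⊆ an_{G̃}({y, z'}) such that ({z'},W') is a valid conditional instrumental set relative to (x,y) in G. -/

import Mathlib

/-- Edge type of a step on a walk in a mixed graph, relative to the direction of travel:
`fwd` is a directed edge pointing forward, `back` a directed edge pointing backward,
`bi` a bidirected edge. -/
inductive EdgeDir : Type
  | fwd
  | back
  | bi
  deriving DecidableEq

/-- The edge has an arrowhead at its second endpoint. -/
def EdgeDir.arrowSnd : EdgeDir → Prop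
  | .fwd => True
  | .back => False
  | .bi => True

/-- The edge has an arrowhead at its first endpoint. -/
def EdgeDir.arrowFst : EdgeDir → Prop
  | .fwd => False
  | .back => True
  | .bi => True

/-- The common node between consecutive walk edges `e₁, e₂` is a collider:
both edges have an arrowhead at it. -/
def IsColliderPair (e₁ e₂ : EdgeDir) : Prop := e₁.arrowSnd ∧ e₂.arrowFst

/-- A mixed graph: a set of directed edges and a set of bidirected edges on node type `V`. -/
structure MixedGraph (V : Type) where
  dir : V → V → Prop
  bidir : V → V → Prop

namespace MixedGraph

variable {V : Type}

/-- `G` is an acyclic directed mixed graph: the bidirected edges are symmetric and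
the directed edges contain no directed cycle. -/
def IsADMG (G : MixedGraph V) : Prop :=
  (∀ a b, G.bidir a b → G.bidir b a) ∧ ∀ v, ¬ Relation.TransGen G.dir v v

/-- There is an edge of type `e` between `a` and `b` (in this travel direction). -/
def IsEdge (G : MixedGraph V) : EdgeDir → V → V → Prop
  | .fwd, a, b => G.dir a b
  | .back, a, b => G.dir b a
  | .bi, a, b => G.bidir a b

/-- Walks in a mixed graph. -/
inductive Walk (G : MixedGraph V) : V → V → Type
  | nil (v : V) : Walk G v v
  | cons {a b c : V} (e : EdgeDir) (hab : G.IsEdge e a b) (w : Walk G b c) : Walk G a c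

namespace Walk

variable {G : MixedGraph V}

/-- The list of nodes of a walk, in order (with multiplicity). -/
def support : {a b : V} → G.Walk a b → List V
  | a, _, .nil _ => [a]
  | a, _, .cons _ _ w => a :: w.support

/-- The list of edge types along a walk. -/
def edges : {a b : V} → G.Walk a b → List EdgeDir
  | _, _, .nil _ => []
  | _, _, .cons e _ w => e :: w.edges

/-- All edges of the walk are directed and point toward the end of the walk. -/
def AllFwd : {a b : V} → G.Walk a b → Prop
  | _, _, .nil _ => True
  | _, _, .cons e _ w => e = EdgeDir.fwd ∧ w.AllFwd

/-- Auxiliary predicate: the current node `b` was reached via an edge of type `e₁` and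
the walk continues with `w`; every interior node from `b` onward that is a collider is in `W`
and every interior node from `b` onward that is a non-collider is not in `W`. -/
def openFrom (W : Set V) : EdgeDir → (b : V) → {c : V} → G.Walk b c → Prop
  | _, _, _, .nil _ => True
  | e₁, b, _, @Walk.cons _ _ _ m _ e₂ _ w =>
      (IsColliderPair e₁ e₂ → b ∈ W) ∧ (¬ IsColliderPair e₁ e₂ → b ∉ W) ∧
      openFrom W e₂ m w

/-- A walk is open given `W` if every collider on it lies in `W` and no non-collider
on it lies in `W`. -/
def IsOpen {a b : V} (W : Set V) (w : G.Walk a b) : Prop :=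
  match w with
  | .nil _ => True
  | @Walk.cons _ _ _ m _ e _ w' => openFrom W e m w'

/-- The walk ends with a segment of the form `x → ⋯ → end`: it has a final subwalk that
starts at `x` and consists solely of directed edges pointing toward the end of the walk. -/
def EndsWithDirFrom (x : V) : {a b : V} → G.Walk a b → Prop
  | a, _, .nil _ => a = x
  | a, _, .cons e _ w => (a = x ∧ e = EdgeDir.fwd ∧ w.AllFwd) ∨ w.EndsWithDirFrom x

/-- The first edge of the walk has an arrowhead at the start node. -/
def firstArrowIn : {a b : V} → G.Walk a b → Prop
  | _, _, .nil _ => False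
  | _, _, .cons e _ _ => e.arrowFst

/-- The last edge of the walk has an arrowhead at the end node. -/
def lastArrowIn : {a b : V} → G.Walk a b → Prop
  | _, _, .nil _ => False
  | _, _, .cons e _ (.nil _) => e.arrowSnd
  | _, _, .cons _ _ (.cons e h w) => lastArrowIn (.cons e h w)

/-- For each interior node of the walk, the pair of edges incident to it on the walk,
together with the node itself. -/
def colliderTriples {a b : V} (w : G.Walk a b) : List (EdgeDir × EdgeDir × V) :=
  w.edges.zip (w.edges.tail.zip w.support.tail)

end Walk

/-- `X` and `Z` are d-connected given `C`: some walk from a node of `X` to a node of `Z`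
is open given `C`. -/
def dConn (G : MixedGraph V) (X Z C : Set V) : Prop :=
  ∃ x ∈ X, ∃ z ∈ Z, ∃ w : G.Walk x z, w.IsOpen C

/-- The descendants of `x` (including `x` itself). -/
def desc (G : MixedGraph V) (x : V) : Set V := {v | Relation.ReflTransGen G.dir x v}

/-- The descendants of a set of nodes. -/
def descSet (G : MixedGraph V) (S : Set V) : Set V :=
  {v | ∃ s ∈ S, Relation.ReflTransGen G.dir s v}

/-- The ancestors of a set of nodes (including the set itself). -/
def anc (G : MixedGraph V) (S : Set V) : Set V :=
  {v | ∃ s ∈ S, Relation.ReflTransGen G.dir v s}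

/-- The parents of a set of nodes. -/
def pa (G : MixedGraph V) (S : Set V) : Set V := {p | ∃ s ∈ S, G.dir p s}

/-- `causal_G(x,y)`: the nodes `v ≠ x` lying on a proper directed path from `x` to `y`. -/
def causal (G : MixedGraph V) (x y : V) : Set V :=
  {v | v ≠ x ∧ ∃ w : G.Walk x y, w.AllFwd ∧ w.support.Nodup ∧ v ∈ w.support}

/-- The forbidden nodes `forb_G(x,y) = de_G(causal_G(x,y)) ∪ {x}`. -/
def forb (G : MixedGraph V) (x y : V) : Set V := G.descSet (G.causal x y) ∪ {x}

/-- `G̃`: the graph `G` with every directed edge from `x` to a node of `causal_G(x,y)` removed. -/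
def tilde (G : MixedGraph V) (x y : V) : MixedGraph V where
  dir a b := G.dir a b ∧ ¬(a = x ∧ b ∈ G.causal x y)
  bidir := G.bidir

/-- `(Z, W)` is a valid conditional instrumental set relative to `(x, y)` in `G`
(the graphical criterion of Henckel et al., taken as the definition): the sets
`{x,y}`, `Z`, `W` are pairwise disjoint, `(Z ∪ W) ∩ forb_G(x,y) = ∅`, `x ⊄⊥_G Z | W`,
and `y ⊥_G̃ Z | W`. -/
def ValidCIS (G : MixedGraph V) (x y : V) (Z W : Set V) : Prop :=
  x ≠ y ∧ x ∉ Z ∧ x ∉ W ∧ y ∉ Z ∧ y ∉ W ∧ Disjoint Z W ∧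
  (Z ∪ W) ∩ G.forb x y = ∅ ∧
  G.dConn {x} Z W ∧
  ¬ (G.tilde x y).dConn {y} Z W

/-- `W` is a nearest separator with respect to `(y, z, R)` in `H` (with ambient node `x`). -/
def NearestSep (H : MixedGraph V) (x y z : V) (R : Set V) (W : Set V) : Prop :=
  W ⊆ R ∩ H.anc {y, z} ∧
  ¬ H.dConn {y} {z} W ∧
  ∀ w ∈ W, ∀ W' ⊆ (R ∩ H.anc {y, z}) \ {x, y, w},
    H.dConn {w} {z} W' → H.dConn {y} {z} W'

/-- `dis_{G,W}(u)`: the nodes connected to `u` via a path of bidirected edges with no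
node in `W` (with `u ∈ dis_{G,W}(u)`). -/
def dis (G : MixedGraph V) (W : Set V) (u : V) : Set V :=
  {v | Relation.ReflTransGen (fun a b => G.bidir a b ∧ a ∉ W ∧ b ∉ W) u v}

/-- `dis⁺_{G,W}(u) = (dis_{G,W}(u) ∪ pa_G(dis_{G,W}(u))) ∖ W`. -/
def disPlus (G : MixedGraph V) (W : Set V) (u : V) : Set V :=
  (G.dis W u ∪ G.pa (G.dis W u)) \ W

/-- `W^opt` of Henckel et al. -/
def Wopt (G : MixedGraph V) (x y : V) : Set V := G.disPlus {x} y \ {x, y}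

/-- `Z^opt` of Henckel et al. -/
def Zopt (G : MixedGraph V) (x y : V) : Set V :=
  G.disPlus {y} x \ (G.Wopt x y ∪ {x, y})

/-- The latent projection of `G` over the latent nodes `L`: a directed edge exactly when
`G` has a directed path whose non-endpoint nodes lie in `L`, and a bidirected edge exactly
when `G` has a path whose non-endpoint nodes are non-colliders lying in `L` and whose first
and last edges have an arrowhead at the respective endpoint. -/
def latentProj (G : MixedGraph V) (L : Set V) : MixedGraph V where
  dir a b := a ∉ L ∧ b ∉ L ∧ ∃ w : G.Walk a b,
    w.edges ≠ [] ∧ w.AllFwd ∧ w.support.Nodup ∧ ∀ v ∈ w.support.tail.dropLast, v ∈ L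
  bidir a b := a ∉ L ∧ b ∉ L ∧ ∃ w : G.Walk a b,
    w.support.Nodup ∧ w.firstArrowIn ∧ w.lastArrowIn ∧
    (∀ v ∈ w.support.tail.dropLast, v ∈ L) ∧
    ∀ t ∈ w.colliderTriples, ¬ IsColliderPair t.1 t.2.1

end MixedGraph

/-- The moralization of a DAG with edge relation `E` contains the (undirected) edge
`a − b` (for `a ≠ b`) exactly when `E a b`, or `E b a`, or `a` and `b` have a common child. -/
def MoralEdge {α : Type} (E : α → α → Prop) (a b : α) : Prop :=
  a ≠ b ∧ (E a b ∨ E b a ∨ ∃ c, E a c ∧ E b c)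

/-!
Follow a `W`-open walk `ρ` from `x` to a node `t`, with `x` only at its start, keeping the
invariant: `t = z`, or `t ∈ W` is not a `G̃`-ancestor of `y`, `ρ` enters `t` with an arrowhead,
and no `W`-open walk of `G̃` from `y` enters `t` with an arrowhead. Either way `y` and `t` are
separated in `G̃` given `C = (W ∩ an_G̃{y, t}) \ {t}`: a `C`-open walk from `y` to `t`, cut at its
first visit of `t`, consists of ancestors of `{y, t}`, hence is `W`-open, and by acyclicity it
enters `t` with an arrowhead unless `t` is an ancestor of `y`. If `ρ` is `C`-open, `({t}, C)` is
valid and ancestral. Otherwise `ρ` has a collider `c ∈ W \ C`, which is not an ancestor of `y`;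
a `W`-open walk of `G̃` from `y` entering `c` with an arrowhead would continue along `ρ` (which
avoids `x`, hence lies in `G̃`) to a `W`-open walk from `y` to `t` that the invariant rules out.
So the invariant passes to `c` and the shorter walk from `x` to `c`.
-/

lemma EdgeDir.eq_back_of_not_arrowSnd {e : EdgeDir} (h : ¬ e.arrowSnd) : e = .back := by
  cases e <;> simp_all [EdgeDir.arrowSnd]

lemma EdgeDir.eq_fwd_of_not_arrowFst {e : EdgeDir} (h : ¬ e.arrowFst) : e = .fwd := by
  cases e <;> simp_all [EdgeDir.arrowFst]

namespace MixedGraph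

variable {V : Type} {G : MixedGraph V}

lemma mem_anc_of_mem {S : Set V} {v : V} (hv : v ∈ S) : v ∈ G.anc S := ⟨v, hv, .refl⟩

lemma anc_mono {S T : Set V} (h : S ⊆ T) : G.anc S ⊆ G.anc T :=
  fun _ ⟨s, hs, hvs⟩ => ⟨s, h hs, hvs⟩

lemma mem_anc_of_reflTransGen {S : Set V} {u v : V} (huv : Relation.ReflTransGen G.dir u v)
    (hv : v ∈ G.anc S) : u ∈ G.anc S :=
  let ⟨s, hs, hvs⟩ := hv
  ⟨s, hs, huv.trans hvs⟩

lemma anc_union_subset {S T : Set V} (h : T ⊆ G.anc S) : G.anc (S ∪ T) ⊆ G.anc S := by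
  rintro v ⟨s, hs | hs, hvs⟩
  · exact ⟨s, hs, hvs⟩
  · exact mem_anc_of_reflTransGen hvs (h hs)

namespace Walk

def append : {a b c : V} → G.Walk a b → G.Walk b c → G.Walk a c
  | _, _, _, .nil _, w₂ => w₂
  | _, _, _, .cons e h w, w₂ => .cons e h (w.append w₂)

def length : {a b : V} → G.Walk a b → ℕ
  | _, _, .nil _ => 0
  | _, _, .cons _ _ w => w.length + 1

variable {a b c m : V}

@[simp] lemma nil_append (w : G.Walk a b) : (nil a).append w = w := rfl

@[simp] lemma cons_append (e : EdgeDir) (h : G.IsEdge e a m) (w₁ : G.Walk m b)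
    (w₂ : G.Walk b c) : (cons e h w₁).append w₂ = cons e h (w₁.append w₂) := rfl

lemma length_append (w₁ : G.Walk a b) (w₂ : G.Walk b c) :
    (w₁.append w₂).length = w₁.length + w₂.length := by
  induction w₁ with
  | nil => simp [length]
  | cons e h w ih => simp only [cons_append, length, ih]; omega

lemma support_eq_cons (w : G.Walk a b) : w.support = a :: w.support.tail := by
  cases w <;> rfl

lemma start_mem_support (w : G.Walk a b) : a ∈ w.support := by
  rw [support_eq_cons]; exact List.mem_cons_self

lemma end_mem_support (w : G.Walk a b) : b ∈ w.support := by
  induction w with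
  | nil => exact List.mem_singleton_self _
  | cons e h w ih => exact List.mem_cons_of_mem _ ih

lemma support_dropLast_cons (e : EdgeDir) (h : G.IsEdge e a m) (w : G.Walk m b) :
    (cons e h w).support.dropLast = a :: w.support.dropLast :=
  List.dropLast_cons_of_ne_nil (by rw [support_eq_cons]; exact List.cons_ne_nil _ _)

lemma support_tail_append (w₁ : G.Walk a b) (w₂ : G.Walk b c) :
    (w₁.append w₂).support.tail = w₁.support.tail ++ w₂.support.tail := by
  induction w₁ with
  | nil => rfl
  | cons e h w ih =>
    change (w.append w₂).support = w.support ++ _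
    rw [support_eq_cons (w.append w₂), ih, ← List.cons_append, ← support_eq_cons]

lemma isOpen_cons_cons (C : Set V) (e e' : EdgeDir) (h : G.IsEdge e a m) (h' : G.IsEdge e' m b)
    (w : G.Walk b c) :
    (cons e h (cons e' h' w)).IsOpen C ↔
      (IsColliderPair e e' ↔ m ∈ C) ∧ (cons e' h' w).IsOpen C := by
  change ((_ → _) ∧ (¬ _ → _) ∧ (cons e' h' w).IsOpen C) ↔ _
  by_cases hc : IsColliderPair e e' <;> simp [hc]

lemma IsOpen.of_cons {C : Set V} {e : EdgeDir} {h : G.IsEdge e a m} {w : G.Walk m b}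
    (hw : (cons e h w).IsOpen C) : w.IsOpen C := by
  cases w with
  | nil => trivial
  | cons e' h' w' => exact ((isOpen_cons_cons C e e' h h' w').1 hw).2

lemma IsOpen.of_append {C : Set V} {w₁ : G.Walk a b} {w₂ : G.Walk b c}
    (hw : (w₁.append w₂).IsOpen C) : w₁.IsOpen C ∧ w₂.IsOpen C := by
  induction w₁ with
  | nil => exact ⟨trivial, hw⟩
  | cons e h w ih =>
    cases w with
    | nil => exact ⟨trivial, hw.of_cons⟩
    | cons e' h' w' =>
      rw [cons_append, cons_append, isOpen_cons_cons] at hw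
      obtain ⟨hm, hrest⟩ := hw
      obtain ⟨hw', hw₂⟩ := ih hrest
      exact ⟨(isOpen_cons_cons C e e' h h' w').2 ⟨hm, hw'⟩, hw₂⟩

lemma IsOpen.of_subset {C W : Set V} {w : G.Walk a b} (hw : w.IsOpen C) (hCW : C ⊆ W)
    (hWC : ∀ u ∈ w.support.dropLast, u ∈ W → u ∈ C) : w.IsOpen W := by
  induction w with
  | nil => trivial
  | cons e h w ih =>
    cases w with
    | nil => trivial
    | cons e' h' w' =>
      rw [support_dropLast_cons, support_dropLast_cons] at hWC
      rw [isOpen_cons_cons] at hw ⊢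
      refine ⟨⟨fun hc => hCW (hw.1.1 hc), fun hmW => hw.1.2 (hWC _ ?_ hmW)⟩, ih hw.2 ?_⟩
      · exact List.mem_cons_of_mem _ List.mem_cons_self
      · rw [support_dropLast_cons]
        exact fun u hu => hWC u (List.mem_cons_of_mem _ hu)

lemma lastArrowIn_cons (e : EdgeDir) (h : G.IsEdge e a m) {w : G.Walk m b}
    (hw : w.lastArrowIn) : (cons e h w).lastArrowIn := by
  cases w with
  | nil => exact hw.elim
  | cons => exact hw

lemma length_pos_of_firstArrowIn {w : G.Walk a b} (hw : w.firstArrowIn) : 0 < w.length := by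
  cases w with
  | nil => exact hw.elim
  | cons => exact Nat.succ_pos _

lemma lastArrowIn_append (w₁ : G.Walk a b) {w₂ : G.Walk b c} (hw₂ : 0 < w₂.length) :
    (w₁.append w₂).lastArrowIn ↔ w₂.lastArrowIn := by
  induction w₁ with
  | nil => rfl
  | cons e h w ih =>
    cases w with
    | nil =>
      cases w₂ with
      | nil => exact absurd hw₂ (lt_irrefl 0)
      | cons => rfl
    | cons => exact ih hw₂

lemma isOpen_append_of_collider {C : Set V} {w₁ : G.Walk a b} {w₂ : G.Walk b c}
    (h₁ : w₁.lastArrowIn) (h₂ : w₂.firstArrowIn) :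
    (w₁.append w₂).IsOpen C ↔ w₁.IsOpen C ∧ w₂.IsOpen C ∧ b ∈ C := by
  induction w₁ with
  | nil => exact h₁.elim
  | cons e h w ih =>
    cases w with
    | nil =>
      cases w₂ with
      | nil => exact h₂.elim
      | cons e₂ h₂' w₂ =>
        rw [cons_append, nil_append, isOpen_cons_cons,
          iff_true_intro (show IsColliderPair e e₂ from ⟨h₁, h₂⟩), true_iff]
        exact ⟨fun ⟨hb, hw₂⟩ => ⟨trivial, hw₂, hb⟩, fun ⟨_, hw₂, hb⟩ => ⟨hb, hw₂⟩⟩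
    | cons e' h' w' =>
      rw [cons_append, cons_append, isOpen_cons_cons, ← cons_append, ih h₁ h₂, isOpen_cons_cons]
      exact ⟨fun ⟨hm, hw, hw₂, hb⟩ => ⟨⟨hm, hw⟩, hw₂, hb⟩,
        fun ⟨⟨hm, hw⟩, hw₂, hb⟩ => ⟨hm, hw, hw₂, hb⟩⟩

lemma exists_append_eq_notMem_dropLast (w : G.Walk a b) {v : V} (hv : v ∈ w.support) :
    ∃ (w₁ : G.Walk a v) (w₂ : G.Walk v b), w₁.append w₂ = w ∧ v ∉ w₁.support.dropLast := by
  induction w with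
  | nil =>
    obtain rfl : v = _ := List.mem_singleton.1 hv
    exact ⟨nil v, nil v, rfl, List.not_mem_nil⟩
  | @cons a m b e h w ih =>
    by_cases hva : v = a
    · subst hva
      exact ⟨nil v, cons e h w, rfl, List.not_mem_nil⟩
    · obtain ⟨w₁, w₂, rfl, hw₁⟩ := ih ((List.mem_cons.1 hv).resolve_left hva)
      refine ⟨cons e h w₁, w₂, rfl, ?_⟩
      rw [support_dropLast_cons, List.mem_cons]
      exact fun hv' => hv'.elim hva hw₁

lemma exists_append_eq_notMem_support_tail (w : G.Walk a b) {v : V} (hv : v ∈ w.support) :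
    ∃ (w₁ : G.Walk a v) (w₂ : G.Walk v b), w₁.append w₂ = w ∧ v ∉ w₂.support.tail := by
  induction w with
  | nil =>
    obtain rfl : v = _ := List.mem_singleton.1 hv
    exact ⟨nil v, nil v, rfl, List.not_mem_nil⟩
  | cons e h w ih =>
    by_cases hvw : v ∈ w.support
    · obtain ⟨w₁, w₂, rfl, hw₂⟩ := ih hvw
      exact ⟨cons e h w₁, w₂, rfl, hw₂⟩
    · obtain rfl : v = _ := (List.mem_cons.1 hv).resolve_right hvw
      exact ⟨nil v, cons e h w, rfl, hvw⟩

lemma exists_collider_notMem_of_not_isOpen {C W : Set V} (hCW : C ⊆ W) {w : G.Walk a b}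
    (hW : w.IsOpen W) (hC : ¬ w.IsOpen C) :
    ∃ (c : V) (w₁ : G.Walk a c) (w₂ : G.Walk c b),
      w₁.append w₂ = w ∧ w₁.lastArrowIn ∧ w₂.firstArrowIn ∧ c ∉ C := by
  induction w with
  | nil => exact absurd trivial hC
  | cons e h w ih =>
    cases w with
    | nil => exact absurd trivial hC
    | cons e' h' w' =>
      rw [isOpen_cons_cons] at hW hC
      by_cases hrest : (cons e' h' w').IsOpen C
      · have hcol : IsColliderPair e e' := by
          by_contra hcol
          exact hC ⟨iff_of_false hcol fun hm => hcol (hW.1.2 (hCW hm)), hrest⟩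
        exact ⟨_, cons e h (nil _), cons e' h' w', rfl, hcol.1, hcol.2,
          fun hm => hC ⟨iff_of_true hcol hm, hrest⟩⟩
      · obtain ⟨c, w₁, w₂, hw, h₁, h₂, hc⟩ := ih hW.2 hrest
        exact ⟨c, cons e h w₁, w₂, by rw [cons_append, hw], lastArrowIn_cons e h h₁, h₂, hc⟩

lemma mem_anc_of_isOpen_cons {C : Set V} {e : EdgeDir} (he : e.arrowSnd) (h : G.IsEdge e a m)
    {w : G.Walk m b} (hw : (cons e h w).IsOpen C) : m ∈ G.anc ({b} ∪ C) := by
  induction w generalizing a e with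
  | nil => exact mem_anc_of_mem (Or.inl rfl)
  | cons e' h' w ih =>
    rw [isOpen_cons_cons] at hw
    by_cases he' : e'.arrowFst
    · exact mem_anc_of_mem (Or.inr (hw.1.1 ⟨he, he'⟩))
    · obtain rfl := EdgeDir.eq_fwd_of_not_arrowFst he'
      exact mem_anc_of_reflTransGen (.single h') (ih (e := .fwd) trivial h' hw.2)

lemma IsOpen.mem_anc_of_mem_support {C : Set V} {w : G.Walk a b} (hw : w.IsOpen C) :
    ∀ v ∈ w.support, v ∈ G.anc ({a, b} ∪ C) := by
  induction w with
  | nil => exact fun v hv => mem_anc_of_mem (Or.inl (Or.inl (List.mem_singleton.1 hv)))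
  | @cons a m b e h w ih =>
    have hm : m ∈ G.anc ({a, b} ∪ C) := by
      by_cases he : e.arrowSnd
      · exact anc_mono (Set.union_subset_union_left C (Set.subset_insert a {b}))
          (mem_anc_of_isOpen_cons he h hw)
      · obtain rfl := EdgeDir.eq_back_of_not_arrowSnd he
        exact mem_anc_of_reflTransGen (.single h) (mem_anc_of_mem (by simp))
    intro v hv
    rcases List.mem_cons.1 hv with rfl | hv
    · exact mem_anc_of_mem (by simp)
    · obtain ⟨s, hs, hvs⟩ := ih hw.of_cons v hv
      rcases hs with (rfl | rfl) | hs
      · exact mem_anc_of_reflTransGen hvs hm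
      · exact ⟨s, by simp, hvs⟩
      · exact ⟨s, Or.inr hs, hvs⟩

lemma exists_dir_of_not_lastArrowIn (e : EdgeDir) (h : G.IsEdge e a m) (w : G.Walk m b)
    (hw : ¬ (cons e h w).lastArrowIn) : ∃ p ∈ (cons e h w).support, G.dir b p := by
  induction w generalizing a e with
  | nil =>
    obtain rfl := EdgeDir.eq_back_of_not_arrowSnd hw
    exact ⟨a, List.mem_cons_self, h⟩
  | cons e' h' w ih =>
    obtain ⟨p, hp, hbp⟩ := ih e' h' hw
    exact ⟨p, List.mem_cons_of_mem _ hp, hbp⟩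

end Walk

open Walk

lemma dConn_singleton_iff {a b : V} {C : Set V} :
    G.dConn {a} {b} C ↔ ∃ w : G.Walk a b, w.IsOpen C := by
  constructor
  · rintro ⟨_, rfl, _, rfl, w, hw⟩
    exact ⟨w, hw⟩
  · rintro ⟨w, hw⟩
    exact ⟨a, rfl, b, rfl, w, hw⟩

lemma exists_isOpen_of_isOpen_inter_anc (hG : ∀ v, ¬ Relation.TransGen G.dir v v)
    {W : Set V} {y t : V} {τ : G.Walk y t} (hτ : τ.IsOpen ((W ∩ G.anc {y, t}) \ {t})) :
    ∃ τ' : G.Walk y t, τ'.IsOpen W ∧ (τ'.lastArrowIn ∨ t ∈ G.anc {y}) := by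
  obtain ⟨τ', _, rfl, ht⟩ := τ.exists_append_eq_notMem_dropLast (end_mem_support τ)
  have hτ' := hτ.of_append.1
  have hanc : ∀ v ∈ τ'.support, v ∈ G.anc {y, t} :=
    fun v hv => anc_union_subset (fun u hu => hu.1.2) (hτ'.mem_anc_of_mem_support v hv)
  refine ⟨τ', hτ'.of_subset (fun u hu => hu.1.1) fun u hu huW =>
    ⟨⟨huW, hanc u (List.dropLast_subset _ hu)⟩, fun hut => ht (hut ▸ hu)⟩, ?_⟩
  cases τ' with
  | nil => exact Or.inr (mem_anc_of_mem rfl)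
  | cons e h w =>
    refine or_iff_not_imp_left.2 fun hl => ?_
    obtain ⟨p, hp, htp⟩ := exists_dir_of_not_lastArrowIn e h w hl
    obtain ⟨s, hs | hs, hps⟩ := hanc p hp
    · exact ⟨s, hs, .head htp hps⟩
    · exact (hG t (Relation.TransGen.head' htp (hs ▸ hps))).elim

variable {x y z t : V} {W : Set V}

lemma tilde_acyclic (hG : G.IsADMG) (v : V) : ¬ Relation.TransGen (G.tilde x y).dir v v :=
  fun hv => hG.2 v (Relation.TransGen.mono (fun _ _ h => h.1) _ _ hv)

lemma isEdge_tilde {e : EdgeDir} {a b : V} (h : G.IsEdge e a b) (ha : a ≠ x) (hb : b ≠ x) :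
    (G.tilde x y).IsEdge e a b := by
  cases e with
  | fwd => exact ⟨h, fun hc => ha hc.1⟩
  | back => exact ⟨h, fun hc => hb hc.1⟩
  | bi => exact h

namespace Walk

def toTilde (y : V) : {a b : V} → (w : G.Walk a b) → x ∉ w.support → (G.tilde x y).Walk a b
  | _, _, .nil v, _ => .nil v
  | _, _, .cons e h w, hx =>
    .cons e (isEdge_tilde h (fun hax => hx (hax ▸ List.mem_cons_self))
        fun hmx => hx (List.mem_cons_of_mem _ (hmx ▸ start_mem_support w)))
      (w.toTilde y fun hxw => hx (List.mem_cons_of_mem _ hxw))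

variable {a b : V}

lemma isOpen_toTilde {C : Set V} (w : G.Walk a b) (hx : x ∉ w.support) :
    (w.toTilde y hx).IsOpen C ↔ w.IsOpen C := by
  induction w with
  | nil => rfl
  | cons e h w ih =>
    cases w with
    | nil => rfl
    | cons e' h' w' =>
      simp only [toTilde] at ih ⊢
      rw [isOpen_cons_cons, isOpen_cons_cons, ih fun hxw => hx (List.mem_cons_of_mem _ hxw)]

lemma firstArrowIn_toTilde (w : G.Walk a b) (hx : x ∉ w.support) :
    (w.toTilde y hx).firstArrowIn ↔ w.firstArrowIn := by
  cases w <;> rfl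

lemma lastArrowIn_toTilde (w : G.Walk a b) (hx : x ∉ w.support) :
    (w.toTilde y hx).lastArrowIn ↔ w.lastArrowIn := by
  induction w with
  | nil => rfl
  | cons e h w ih =>
    cases w with
    | nil => rfl
    | cons e' h' w' => exact ih fun hxw => hx (List.mem_cons_of_mem _ hxw)

end Walk

lemma exists_isOpen_append_toTilde {c : V} {τ : (G.tilde x y).Walk y c}
    (hτ : τ.IsOpen W) (hτc : τ.lastArrowIn) {ρ : G.Walk c t} (hρ : ρ.IsOpen W)
    (hρc : ρ.firstArrowIn) (hx : x ∉ ρ.support) (hcW : c ∈ W) :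
    ∃ τ' : (G.tilde x y).Walk y t, τ'.IsOpen W ∧ (ρ.lastArrowIn → τ'.lastArrowIn) := by
  have hρc' := (firstArrowIn_toTilde (y := y) ρ hx).2 hρc
  refine ⟨τ.append (ρ.toTilde y hx),
    (isOpen_append_of_collider hτc hρc').2 ⟨hτ, (isOpen_toTilde ρ hx).2 hρ, hcW⟩, fun hl => ?_⟩
  rw [lastArrowIn_append τ (length_pos_of_firstArrowIn hρc'), lastArrowIn_toTilde]
  exact hl

lemma ValidCIS.of_mem_of_subset {C : Set V} (hv : G.ValidCIS x y {z} W)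
    (ht : t ∈ {z} ∪ W) (hCW : C ⊆ W) (htC : t ∉ C) (hx : G.dConn {x} {t} C)
    (hy : ¬ (G.tilde x y).dConn {y} {t} C) : G.ValidCIS x y {t} C := by
  obtain ⟨hxy, -, hxW, hyz, hyW, -, hforb, -, -⟩ := hv
  have hsub : {t} ∪ C ⊆ {z} ∪ W :=
    Set.union_subset (Set.singleton_subset_iff.2 ht) (hCW.trans Set.subset_union_right)
  have hforb' : ({t} ∪ C) ∩ G.forb x y = ∅ :=
    Set.eq_empty_of_subset_empty (hforb ▸ Set.inter_subset_inter_left _ hsub)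
  refine ⟨hxy, fun hxt => ?_, fun hxC => hxW (hCW hxC), fun hyt => ?_,
    fun hyC => hyW (hCW hyC), Set.disjoint_singleton_left.2 htC, hforb', hx, hy⟩
  · exact (Set.eq_empty_iff_forall_notMem.1 hforb') x ⟨Or.inl hxt, Or.inr rfl⟩
  · obtain rfl : y = t := hyt
    exact ht.elim hyz hyW

def AdmissibleEnd (G : MixedGraph V) (x y z : V) (W : Set V) {t : V} (ρ : G.Walk x t) : Prop :=
  t = z ∨ t ∈ W ∧ ρ.lastArrowIn ∧ t ∉ (G.tilde x y).anc {y} ∧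
    ∀ τ : (G.tilde x y).Walk y t, τ.IsOpen W → ¬ τ.lastArrowIn

variable {ρ : G.Walk x t}

lemma AdmissibleEnd.not_dConn_inter_anc (hG : G.IsADMG)
    (hsep : ¬ (G.tilde x y).dConn {y} {z} W) (ht : G.AdmissibleEnd x y z W ρ) :
    ¬ (G.tilde x y).dConn {y} {t} ((W ∩ (G.tilde x y).anc {y, t}) \ {t}) := by
  rw [dConn_singleton_iff]
  rintro ⟨τ, hτ⟩
  obtain ⟨τ', hτ', hτ't⟩ := exists_isOpen_of_isOpen_inter_anc (tilde_acyclic hG) hτ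
  rcases ht with rfl | ⟨-, -, hty, hblock⟩
  · exact hsep (dConn_singleton_iff.2 ⟨τ', hτ'⟩)
  · exact hτ't.elim (hblock τ' hτ') hty

lemma AdmissibleEnd.of_append {c : V} {ρ₁ : G.Walk x c} {ρ₂ : G.Walk c t}
    (hsep : ¬ (G.tilde x y).dConn {y} {z} W) (hzW : z ∉ W)
    (ht : G.AdmissibleEnd x y z W (ρ₁.append ρ₂)) (hρ₁c : ρ₁.lastArrowIn)
    (hρ₂c : ρ₂.firstArrowIn) (hρ₂ : ρ₂.IsOpen W) (hx : x ∉ ρ₂.support) (hcW : c ∈ W)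
    (hcC : c ∉ (W ∩ (G.tilde x y).anc {y, t}) \ {t}) : G.AdmissibleEnd x y z W ρ₁ := by
  refine Or.inr ⟨hcW, hρ₁c, fun hc => ?_, fun τ hτ hτc => ?_⟩
  · by_cases hct : c = t
    · subst hct
      rcases ht with rfl | ⟨-, -, hty, -⟩
      · exact hzW hcW
      · exact hty hc
    · exact hcC ⟨⟨hcW, anc_mono (by simp) hc⟩, hct⟩
  · obtain ⟨τ', hτ', hτ't⟩ := exists_isOpen_append_toTilde hτ hτc hρ₂ hρ₂c hx hcW
    rcases ht with rfl | ⟨-, hρt, -, hblock⟩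
    · exact hsep (dConn_singleton_iff.2 ⟨τ', hτ'⟩)
    · rw [lastArrowIn_append ρ₁ (length_pos_of_firstArrowIn hρ₂c)] at hρt
      exact hblock τ' hτ' (hτ't hρt)

lemma ValidCIS.exists_ancestral_of_walk (hG : G.IsADMG) (hv : G.ValidCIS x y {z} W)
    (ρ : G.Walk x t) (hρ : ρ.IsOpen W) (hρx : x ∉ ρ.support.tail)
    (ht : G.AdmissibleEnd x y z W ρ) :
    ∃ (z' : V) (W' : Set V), W' ⊆ (G.tilde x y).anc {y, z'} ∧ G.ValidCIS x y {z'} W' := by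
  induction hn : ρ.length using Nat.strong_induction_on generalizing t with
  | _ n ih =>
  have ⟨_, _, hxW, _, _, hzW, _, _, hsep⟩ := hv
  set C := (W ∩ (G.tilde x y).anc {y, t}) \ {t}
  have hCW : C ⊆ W := fun u hu => hu.1.1
  by_cases hρC : ρ.IsOpen C
  · exact ⟨t, C, fun u hu => hu.1.2, hv.of_mem_of_subset (ht.imp_right And.left) hCW
      (fun htC => htC.2 rfl) (dConn_singleton_iff.2 ⟨ρ, hρC⟩) (ht.not_dConn_inter_anc hG hsep)⟩
  obtain ⟨c, ρ₁, ρ₂, rfl, hρ₁c, hρ₂c, hcC⟩ := exists_collider_notMem_of_not_isOpen hCW hρ hρC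
  obtain ⟨hρ₁, hρ₂, hcW⟩ := (isOpen_append_of_collider hρ₁c hρ₂c).1 hρ
  rw [support_tail_append, List.mem_append, not_or] at hρx
  have hxρ₂ : x ∉ ρ₂.support := by
    rw [support_eq_cons, List.mem_cons, not_or]
    exact ⟨fun hxc => hxW (hxc ▸ hcW), hρx.2⟩
  have hlen : ρ₁.length < n := by
    rw [← hn, length_append]
    exact Nat.lt_add_of_pos_right (length_pos_of_firstArrowIn hρ₂c)
  exact ih _ hlen ρ₁ hρ₁ hρx.1
    (ht.of_append hsep (Set.disjoint_singleton_left.1 hzW) hρ₁c hρ₂c hρ₂ hxρ₂ hcW hcC) rfl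

end MixedGraph

theorem exists_valid_cis_iff_exists_ancestral_valid_cis_general {V : Type} (G : MixedGraph V)
    (hG : G.IsADMG) (x y : V) :
    (∃ (z : V) (W : Set V), G.ValidCIS x y {z} W) ↔
      ∃ (z' : V) (W' : Set V), W' ⊆ (G.tilde x y).anc {y, z'} ∧ G.ValidCIS x y {z'} W' := by
  constructor
  · rintro ⟨z, W, hv⟩
    have ⟨_, _, _, _, _, _, _, hxz, _⟩ := hv
    obtain ⟨π, hπ⟩ := MixedGraph.dConn_singleton_iff.1 hxz
    obtain ⟨_, π', rfl, hπ'x⟩ := π.exists_append_eq_notMem_support_tail π.start_mem_support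
    exact hv.exists_ancestral_of_walk hG π' hπ.of_append.2 hπ'x (Or.inl rfl)
  · rintro ⟨z', W', -, hv⟩
    exact ⟨z', W', hv⟩

/-- Let `x` and `y` be distinct nodes in an ADMG `G`. There exist a node
`z` and a set `W` such that `({z},W)` is a valid conditional instrumental set relative to
`(x,y)` in `G` if and only if there exist a node `z'` and a set `W' ⊆ an_G̃({y, z'})`
such that `({z'},W')` is a valid conditional instrumental set relative to `(x,y)` in `G`. -/
theorem exists_valid_cis_iff_exists_ancestral_valid_cis {V : Type} (G : MixedGraph V)
    (hG : G.IsADMG) (x y : V) (hxy : x ≠ y) :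
    (∃ (z : V) (W : Set V), G.ValidCIS x y {z} W) ↔
      ∃ (z' : V) (W' : Set V), W' ⊆ (G.tilde x y).anc {y, z'} ∧ G.ValidCIS x y {z'} W' :=
  exists_valid_cis_iff_exists_ancestral_valid_cis_general G hG x y
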